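/- Let k ≥ 2 and let ℒ = {l₁, l₂, …, l_s} be a set of s nonnegative integers with l₁ < l₂ < … < l_s. Suppose 𝒜 = {A₁, A₂, …, A_m} is a family of m pairwise distinct subsets of [n] such that |A_{i₁} ∩ A_{i₂} ∩ … ∩ A_{i_k}| ∈ ℒ for every collection of k distinct members of 𝒜. If n ≥ (C(h² + h, l₁+1) + 1)·s + l₁, where h is the maximum size of a member of 𝒜, then m ≤ (k − 1)·[C(n−l₁, s) + C(n−l₁, s−1) + … + C(n−l₁, 0)]. -/

import Mathlib

/-!
Polynomial method plus a kernel reduction. Evaluated on characteristic vectors, the polynomials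
`∏_{r ∈ L} (|C ∩ X| - r)` lie in the space of multilinear polynomials of degree at most `|L|`
over `Ω`, of dimension `∑_{i ≤ |L|} C(|Ω|, i)`; for a pairwise `L`-intersecting family (ordered
by size), and for the members outside a largest `k`-wise `L`-intersecting subfamily of a
`(k+1)`-wise one (evaluated at the intersection of a bad `k`-set), they are triangular, hence
linearly independent. Induction on `k` gives `|𝒜| ≤ (k - 1) ∑_{i ≤ |L|} C(|Ω|, i)`.

Any two members of `𝒜` share at least `l₁` points. If all of them share `l₁` points, deleting
these leaves a family on `n - l₁` points. Otherwise, choose members `𝒯` whose intersection `T`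
is minimal subject to `|T| ≥ l₁` and `|𝒯| + |T| ≤ h + 1`. Every member then contains `T` or
meets it in fewer than `l₁` points, and for a member `B` of the second kind, `W = ⋃ 𝒯 ∪ B` has
at most `h² + h` points and meets every member in more than `l₁` points. The members through a fixed
`(l₁+1)`-subset of `W`, with that subset deleted, form a family on `n - l₁ - 1` points with at
most `s - 1` intersection sizes, and the bound on `n` makes
`C(h² + h, l₁ + 1) ∑_{i < s} C(n - l₁ - 1, i) ≤ ∑_{i ≤ s} C(n - l₁, i)`.
-/

open Finset

variable {α : Type*} [DecidableEq α]

/-- The multilinear monomial `x_T` evaluated at the characteristic vector of `X`, so that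
multilinear polynomials become real functions on sets. -/
def setMonomial (T X : Finset α) : ℝ := if T ⊆ X then 1 else 0

def lowDegreeSpan (Ω : Finset α) (d : ℕ) : Submodule ℝ (Finset α → ℝ) :=
  Submodule.span ℝ (setMonomial '' ↑(Ω.powerset.filter (·.card ≤ d)))

lemma lowDegreeSpan_mono {Ω Ω' : Finset α} {d d' : ℕ} (hΩ : Ω ⊆ Ω') (hd : d ≤ d') :
    lowDegreeSpan Ω d ≤ lowDegreeSpan Ω' d' :=
  Submodule.span_mono <| Set.image_mono fun T hT => by
    simp only [coe_filter, mem_powerset] at hT ⊢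
    exact ⟨hT.1.trans hΩ, hT.2.trans hd⟩

instance (Ω : Finset α) (d : ℕ) : FiniteDimensional ℝ (lowDegreeSpan Ω d) := by
  classical
  rw [lowDegreeSpan, ← coe_image]
  exact FiniteDimensional.span_finset ℝ _

lemma finrank_lowDegreeSpan_le (Ω : Finset α) (d : ℕ) :
    Module.finrank ℝ (lowDegreeSpan Ω d) ≤ ∑ i ∈ range (d + 1), Ω.card.choose i := by
  classical
  rw [lowDegreeSpan, ← coe_image]
  refine (finrank_span_finset_le_card _).trans (card_image_le.trans ?_)
  have hsub : Ω.powerset.filter (·.card ≤ d) ⊆ (range (d + 1)).biUnion (Ω.powersetCard ·) :=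
    fun T hT => by
      simp only [mem_filter, mem_powerset] at hT
      simpa [mem_powersetCard, Nat.lt_succ_iff] using hT.symm
  calc _ ≤ _ := card_le_card hsub
    _ ≤ _ := card_biUnion_le
    _ = _ := by simp only [card_powersetCard]

lemma setMonomial_insert (a : α) (T X : Finset α) :
    setMonomial (insert a T) X = (if a ∈ X then 1 else 0) * setMonomial T X := by
  simp only [setMonomial, insert_subset_iff]
  split_ifs <;> simp_all

lemma card_inter_sub_mul_mem_lowDegreeSpan {A : Finset α} {d : ℕ} (r : ℝ)
    {g : Finset α → ℝ} (hg : g ∈ lowDegreeSpan A d) :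
    (fun X => ((A ∩ X).card : ℝ) - r) * g ∈ lowDegreeSpan A (d + 1) := by
  suffices Submodule.map (LinearMap.mulLeft ℝ fun X => ((A ∩ X).card : ℝ) - r)
      (lowDegreeSpan A d) ≤ lowDegreeSpan A (d + 1) from this ⟨g, hg, rfl⟩
  rw [lowDegreeSpan, Submodule.map_span_le]
  rintro _ ⟨T, hT, rfl⟩
  simp only [coe_filter, mem_powerset] at hT
  have hmul : (fun X => ((A ∩ X).card : ℝ) - r) * setMonomial T
      = ∑ a ∈ A, setMonomial (insert a T) - r • setMonomial T := by
    funext X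
    simp [setMonomial_insert, sub_mul]
  rw [LinearMap.mulLeft_apply, hmul]
  refine sub_mem (sum_mem fun a ha => Submodule.subset_span ⟨insert a T, ?_, rfl⟩)
    (Submodule.smul_mem _ _ (Submodule.subset_span ⟨T, ?_, rfl⟩))
  · simpa using ⟨insert_subset ha hT.1, (card_insert_le a T).trans (Nat.add_le_add_right hT.2 1)⟩
  · simpa using ⟨hT.1, hT.2.trans d.le_succ⟩

lemma prod_card_inter_sub_mem_lowDegreeSpan (A : Finset α) (L : Finset ℕ) :
    ∏ r ∈ L, (fun X => ((A ∩ X).card : ℝ) - r) ∈ lowDegreeSpan A L.card := by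
  induction L using Finset.cons_induction with
  | empty =>
    have : setMonomial (∅ : Finset α) = 1 := by funext X; simp [setMonomial]
    rw [prod_empty, ← this]
    exact Submodule.subset_span ⟨∅, by simp, rfl⟩
  | cons r L hr ih =>
    rw [prod_cons, card_cons]
    exact card_inter_sub_mul_mem_lowDegreeSpan r ih

lemma linearIndependent_of_triangular {ι β K : Type*} [Ring K] [NoZeroDivisors K]
    (P : ι → β → K) (Y : ι → β) (w : ι → ℕ)
    (hoff : ∀ i j, i ≠ j → w j ≤ w i → P i (Y j) = 0) (hdiag : ∀ i, P i (Y i) ≠ 0) :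
    LinearIndependent K P := by
  rw [linearIndependent_iff']
  intro s g hsum
  -- Strong induction on `w i`: at `Y i`, heavier terms vanish by `hoff`, lighter ones by induction.
  suffices ∀ N, ∀ i ∈ s, w i = N → g i = 0 from fun i hi => this _ i hi rfl
  intro N
  induction N using Nat.strong_induction_on with
  | _ N ih =>
    intro i hi hwi
    have hev := congrFun hsum (Y i)
    simp only [Finset.sum_apply, Pi.smul_apply, smul_eq_mul, Pi.zero_apply] at hev
    rw [Finset.sum_eq_single_of_mem i hi fun j hj hji => ?_] at hev
    · exact (mul_eq_zero.mp hev).resolve_right (hdiag i)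
    rcases le_or_gt (w i) (w j) with hle | hlt
    · rw [hoff j i hji hle, mul_zero]
    · rw [ih (w j) (hwi ▸ hlt) j hj rfl, zero_mul]

theorem card_le_of_triangular {Ω : Finset α} {t : ℕ} {𝒞 : Finset (Finset α)}
    (hΩ : ∀ C ∈ 𝒞, C ⊆ Ω) (L : Finset α → Finset ℕ) (hL : ∀ C ∈ 𝒞, (L C).card ≤ t)
    (Y : Finset α → Finset α) (w : Finset α → ℕ)
    (hoff : ∀ C ∈ 𝒞, ∀ D ∈ 𝒞, C ≠ D → w D ≤ w C → (C ∩ Y D).card ∈ L C)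
    (hdiag : ∀ C ∈ 𝒞, (C ∩ Y C).card ∉ L C) :
    𝒞.card ≤ ∑ i ∈ range (t + 1), Ω.card.choose i := by
  let P : 𝒞 → Finset α → ℝ := fun C => ∏ r ∈ L C, fun X => ((C.1 ∩ X).card : ℝ) - r
  have hP : ∀ C D : 𝒞, P C (Y D) = 0 ↔ (C.1 ∩ Y D).card ∈ L C := by
    intro C D
    simp only [P, Finset.prod_apply, prod_eq_zero_iff, sub_eq_zero, Nat.cast_inj,
      exists_eq_right']
  have hli : LinearIndependent ℝ P :=
    linearIndependent_of_triangular P (Y ·) (w ·)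
      (fun C D hne hw => (hP C D).2 (hoff _ C.2 _ D.2 (Subtype.coe_ne_coe.2 hne) hw))
      (fun C => mt (hP C C).1 (hdiag _ C.2))
  have hspan : Submodule.span ℝ (Set.range P) ≤ lowDegreeSpan Ω t := by
    rw [Submodule.span_le, Set.range_subset_iff]
    intro C
    exact lowDegreeSpan_mono (hΩ _ C.2) (hL _ C.2)
      (prod_card_inter_sub_mem_lowDegreeSpan C.1 (L C.1))
  calc 𝒞.card = Fintype.card 𝒞 := (Fintype.card_coe 𝒞).symm
    _ = Module.finrank ℝ (Submodule.span ℝ (Set.range P)) := (finrank_span_eq_card hli).symm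
    _ ≤ Module.finrank ℝ (lowDegreeSpan Ω t) := Submodule.finrank_mono hspan
    _ ≤ _ := finrank_lowDegreeSpan_le Ω t

def IsKWiseIntersecting [Fintype α] (k : ℕ) (L : Finset ℕ) (𝒜 : Finset (Finset α)) : Prop :=
  ∀ 𝒮 ⊆ 𝒜, 𝒮.card = k → (𝒮.inf id).card ∈ L

namespace IsKWiseIntersecting

variable [Fintype α] {k t : ℕ} {L : Finset ℕ} {𝒜 ℳ : Finset (Finset α)}

lemma empty (hk : k ≠ 0) : IsKWiseIntersecting k L (∅ : Finset (Finset α)) :=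
  fun 𝒮 h𝒮 hcard => absurd (by rw [← hcard, subset_empty.1 h𝒮, card_empty]) hk

lemma mono (h𝒜 : IsKWiseIntersecting k L 𝒜) {ℬ : Finset (Finset α)} (hℬ : ℬ ⊆ 𝒜) :
    IsKWiseIntersecting k L ℬ :=
  fun 𝒮 h𝒮 => h𝒜 𝒮 (h𝒮.trans hℬ)

lemma card_inter_inf_mem (h𝒜 : IsKWiseIntersecting (k + 1) L 𝒜) {C : Finset α}
    {𝒮 : Finset (Finset α)} (hC : C ∈ 𝒜) (h𝒮 : 𝒮 ⊆ 𝒜) (hC𝒮 : C ∉ 𝒮) (hcard : 𝒮.card = k) :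
    (C ∩ 𝒮.inf id).card ∈ L := by
  simpa [inf_insert] using
    h𝒜 (insert C 𝒮) (insert_subset hC h𝒮) (by rw [card_insert_of_notMem hC𝒮, hcard])

lemma exists_of_not_insert (hℳ : IsKWiseIntersecting k L ℳ) {C : Finset α}
    (hC : ¬ IsKWiseIntersecting k L (insert C ℳ)) :
    ∃ 𝒮 ⊆ insert C ℳ, C ∈ 𝒮 ∧ 𝒮.card = k ∧ (𝒮.inf id).card ∉ L := by
  simp only [IsKWiseIntersecting, not_forall] at hC
  obtain ⟨𝒮, h𝒮, hcard, hL⟩ := hC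
  exact ⟨𝒮, h𝒮, by_contra fun hC𝒮 => hL (hℳ 𝒮 ((subset_insert_iff_of_notMem hC𝒮).1 h𝒮) hcard),
    hcard, hL⟩

lemma card_le_sum_choose_of_two {Ω : Finset α} (h𝒜 : IsKWiseIntersecting 2 L 𝒜) (hL : L.card ≤ t)
    (hΩ : ∀ B ∈ 𝒜, B ⊆ Ω) : 𝒜.card ≤ ∑ i ∈ range (t + 1), Ω.card.choose i := by
  refine card_le_of_triangular hΩ (fun B => L.filter (· < B.card))
    (fun _ _ => (card_filter_le _ _).trans hL) id card (fun C hC D hD hne hDC => ?_) (by simp)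
  have hmem : (C ∩ D).card ∈ L := by
    simpa using h𝒜.card_inter_inf_mem hC (singleton_subset_iff.2 hD) (by simpa using hne)
      (card_singleton D)
  refine mem_filter.2 ⟨hmem, (card_le_card inter_subset_left).lt_of_ne fun heq => hne ?_⟩
  have hCD : C ⊆ D := by
    rw [← eq_of_subset_of_card_le inter_subset_left heq.ge]
    exact inter_subset_right
  exact eq_of_subset_of_card_le hCD hDC

lemma card_sdiff_le_sum_choose {Ω : Finset α} (h𝒜 : IsKWiseIntersecting (k + 1) L 𝒜)
    (hL : L.card ≤ t) (hΩ : ∀ B ∈ 𝒜, B ⊆ Ω) (hℳ𝒜 : ℳ ⊆ 𝒜) (hℳ : IsKWiseIntersecting k L ℳ)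
    (hmax : ∀ C ∈ 𝒜 \ ℳ, ¬ IsKWiseIntersecting k L (insert C ℳ)) :
    (𝒜 \ ℳ).card ≤ ∑ i ∈ range (t + 1), Ω.card.choose i := by
  choose! 𝒮 h𝒮ℳ hC𝒮 h𝒮k h𝒮L using fun C hC => hℳ.exists_of_not_insert (hmax C hC)
  refine card_le_of_triangular (fun C hC => hΩ C (sdiff_subset hC)) (fun _ => L) (fun _ _ => hL)
    (fun C => (𝒮 C).inf id) (fun _ => 0) (fun C hC D hD hCD _ => ?_) (fun C hC => ?_)
  · refine h𝒜.card_inter_inf_mem (sdiff_subset hC)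
      ((h𝒮ℳ D hD).trans (insert_subset (sdiff_subset hD) hℳ𝒜)) (fun hmem => ?_) (h𝒮k D hD)
    rcases mem_insert.1 (h𝒮ℳ D hD hmem) with rfl | hCℳ
    exacts [hCD rfl, (mem_sdiff.1 hC).2 hCℳ]
  · rw [inter_eq_right.2 (inf_le (hC𝒮 C hC))]
    exact h𝒮L C hC

theorem card_le_sum_choose {Ω : Finset α} (h𝒜 : IsKWiseIntersecting k L 𝒜) (hk : 2 ≤ k)
    (hL : L.card ≤ t) (hΩ : ∀ B ∈ 𝒜, B ⊆ Ω) :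
    𝒜.card ≤ (k - 1) * ∑ i ∈ range (t + 1), Ω.card.choose i := by
  induction k, hk using Nat.le_induction generalizing 𝒜 with
  | base => simpa using h𝒜.card_le_sum_choose_of_two hL hΩ
  | succ k hk ih =>
    classical
    obtain ⟨ℳ, hℳ, hmax⟩ := exists_max_image (𝒜.powerset.filter (IsKWiseIntersecting k L)) card
      ⟨∅, mem_filter.2 ⟨empty_mem_powerset 𝒜, empty (by omega)⟩⟩
    rw [mem_filter, mem_powerset] at hℳ
    have hsdiff := h𝒜.card_sdiff_le_sum_choose hL hΩ hℳ.1 hℳ.2 fun C hC hins => by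
      have := hmax (insert C ℳ)
        (mem_filter.2 ⟨mem_powerset.2 (insert_subset (sdiff_subset hC) hℳ.1), hins⟩)
      rw [card_insert_of_notMem (mem_sdiff.1 hC).2] at this
      omega
    calc 𝒜.card = ℳ.card + (𝒜 \ ℳ).card := by rw [← card_sdiff_add_card_eq_card hℳ.1, add_comm]
      _ ≤ (k - 1) * _ + _ := add_le_add (ih hℳ.2 fun B hB => hΩ B (hℳ.1 hB)) hsdiff
      _ = (k + 1 - 1) * _ := by
        rw [Nat.add_sub_cancel, ← Nat.succ_mul, Nat.succ_eq_add_one, Nat.sub_add_cancel (by omega)]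

end IsKWiseIntersecting

lemma mul_sum_range_choose_le {c N s : ℕ} (h : c * s ≤ N + 1) :
    c * ∑ i ∈ range s, N.choose i ≤ ∑ i ∈ range (s + 1), (N + 1).choose i := by
  rw [mul_sum, sum_range_succ']
  refine le_add_right (sum_le_sum fun i hi => Nat.le_of_mul_le_mul_right ?_ i.succ_pos)
  calc c * N.choose i * (i + 1) = c * (i + 1) * N.choose i := by ring
    _ ≤ (N + 1) * N.choose i :=
      Nat.mul_le_mul_right _ ((Nat.mul_le_mul_left c (mem_range.1 hi)).trans h)
    _ = (N + 1).choose (i + 1) * (i + 1) := Nat.add_one_mul_choose_eq N i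

lemma card_le_choose_mul_of_le_card_inter {𝒜 : Finset (Finset α)} {W : Finset α} {j M : ℕ}
    (hW : ∀ B ∈ 𝒜, j ≤ (B ∩ W).card)
    (hM : ∀ S ∈ W.powersetCard j, (𝒜.filter (S ⊆ ·)).card ≤ M) :
    𝒜.card ≤ W.card.choose j * M := by
  have hcover : 𝒜 ⊆ (W.powersetCard j).biUnion fun S => 𝒜.filter (S ⊆ ·) := fun B hB => by
    obtain ⟨S, hS, hSj⟩ := exists_subset_card_eq (hW B hB)
    exact mem_biUnion.2 ⟨S, mem_powersetCard.2 ⟨hS.trans inter_subset_right, hSj⟩,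
      mem_filter.2 ⟨hB, hS.trans inter_subset_left⟩⟩
  calc 𝒜.card ≤ _ := card_le_card hcover
    _ ≤ (W.powersetCard j).card * M := card_biUnion_le_card_mul _ _ _ hM
    _ = W.card.choose j * M := by rw [card_powersetCard]

section

variable [Fintype α]

lemma exists_inf_subset_or_card_inter_lt {𝒜 : Finset (Finset α)} {l : ℕ} {B₀ : Finset α}
    (hB₀ : B₀ ∈ 𝒜) (hl : l ≤ B₀.card) :
    ∃ 𝒯 ⊆ 𝒜, l ≤ (𝒯.inf id).card ∧ 𝒯.card + (𝒯.inf id).card ≤ B₀.card + 1 ∧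
      ∀ B ∈ 𝒜, 𝒯.inf id ⊆ B ∨ (𝒯.inf id ∩ B).card < l := by
  obtain ⟨𝒯, h𝒯, hmin⟩ := exists_min_image (𝒜.powerset.filter fun 𝒯 =>
      l ≤ (𝒯.inf id).card ∧ 𝒯.card + (𝒯.inf id).card ≤ B₀.card + 1) (fun 𝒯 => (𝒯.inf id).card)
    ⟨{B₀}, by simp [hB₀, hl, add_comm]⟩
  rw [mem_filter, mem_powerset] at h𝒯
  obtain ⟨h𝒯𝒜, hl𝒯, hsize⟩ := h𝒯
  refine ⟨𝒯, h𝒯𝒜, hl𝒯, hsize, fun B hB => or_iff_not_imp_left.2 fun hsub => ?_⟩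
  by_contra! hle
  have hlt : (B ∩ 𝒯.inf id).card < (𝒯.inf id).card :=
    card_lt_card ⟨inter_subset_right, fun h => hsub (h.trans inter_subset_left)⟩
  have := hmin (insert B 𝒯) (by
    rw [mem_filter, mem_powerset, inf_insert]
    refine ⟨insert_subset hB h𝒯𝒜, by rwa [inter_comm] at hle, ?_⟩
    have := card_insert_le B 𝒯
    simp only [id, inf_eq_inter]
    omega)
  rw [inf_insert] at this
  exact this.not_gt hlt

lemma exists_card_le_lt_card_inter {𝒜 : Finset (Finset α)} {l h : ℕ} (h𝒜 : 𝒜.Nonempty)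
    (hh : ∀ B ∈ 𝒜, B.card ≤ h) (hpair : ∀ B ∈ 𝒜, ∀ C ∈ 𝒜, l ≤ (B ∩ C).card)
    (hinf : (𝒜.inf id).card < l) :
    ∃ W : Finset α, W.card ≤ h ^ 2 + h ∧ ∀ B ∈ 𝒜, l < (B ∩ W).card := by
  obtain ⟨B₀, hB₀⟩ := h𝒜
  obtain ⟨𝒯, h𝒯𝒜, hl𝒯, hsize, hdich⟩ :=
    exists_inf_subset_or_card_inter_lt hB₀ (by simpa using hpair B₀ hB₀ B₀ hB₀)
  set T := 𝒯.inf id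
  obtain ⟨B₁, hB₁, hTB₁⟩ : ∃ B₁ ∈ 𝒜, ¬ T ⊆ B₁ := by
    by_contra! hall
    exact (card_le_card (Finset.le_inf hall)).not_gt (hinf.trans_le hl𝒯)
  have hTB₁l := (hdich B₁ hB₁).resolve_left hTB₁
  set W := 𝒯.sup id ∪ B₁
  refine ⟨W, ?_, fun B hB => ?_⟩
  · have h𝒯h : 𝒯.card ≤ h := by have := hh B₀ hB₀; omega
    calc W.card ≤ (𝒯.sup id).card + B₁.card := card_union_le _ _
      _ ≤ 𝒯.card * h + h := by
        rw [sup_eq_biUnion]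
        exact add_le_add (card_biUnion_le_card_mul _ _ _ fun G hG => hh G (h𝒯𝒜 hG)) (hh B₁ hB₁)
      _ ≤ h ^ 2 + h := by nlinarith
  · by_contra! hle
    -- `B` meets each `G ∈ 𝒯` in at least `l` points but `W ⊇ G` in at most `l`.
    have hBG : ∀ G ∈ 𝒯, B ∩ G = B ∩ W := fun G hG =>
      eq_of_subset_of_card_le
        (inter_subset_inter_left ((le_sup (f := id) hG).trans subset_union_left))
        (hle.trans (hpair B hB G (h𝒯𝒜 hG)))
    have hBT : B ∩ W ⊆ T := Finset.le_inf fun G hG => hBG G hG ▸ inter_subset_right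
    have hBB₁ : B ∩ B₁ ⊆ T ∩ B₁ :=
      subset_inter ((inter_subset_inter_left subset_union_right).trans hBT) inter_subset_right
    have := card_le_card hBB₁
    have := hpair B hB B₁ hB₁
    omega

end

namespace IsKWiseIntersecting

variable [Fintype α] {k t l s h : ℕ} {L : Finset ℕ} {𝒜 : Finset (Finset α)}

lemma le_card_inter (h𝒜 : IsKWiseIntersecting k L 𝒜) (hk : 2 ≤ k) (hcard : k ≤ 𝒜.card)
    (hl : ∀ x ∈ L, l ≤ x) {B C : Finset α} (hB : B ∈ 𝒜) (hC : C ∈ 𝒜) : l ≤ (B ∩ C).card := by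
  obtain ⟨𝒮, hBC, h𝒮, h𝒮k⟩ :=
    exists_subsuperset_card_eq (insert_subset hB (singleton_subset_iff.2 hC)) (card_le_two.trans hk)
      hcard
  calc l ≤ (𝒮.inf id).card := hl _ (h𝒜 𝒮 h𝒮 h𝒮k)
    _ ≤ (B ∩ C).card := card_le_card (subset_inter (inf_le (hBC (mem_insert_self _ _)))
        (inf_le (hBC (mem_insert_of_mem (mem_singleton_self _)))))

lemma image_sdiff (h𝒜 : IsKWiseIntersecting k L 𝒜) (hk : k ≠ 0) {K : Finset α}
    (hK : ∀ B ∈ 𝒜, K ⊆ B) :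
    IsKWiseIntersecting k ((L.filter (K.card ≤ ·)).image (· - K.card)) (𝒜.image (· \ K)) := by
  intro 𝒮' h𝒮' hcard
  obtain ⟨𝒮, h𝒮, rfl⟩ := subset_image_iff.1 h𝒮'
  rw [card_image_of_injOn ((superset_injOn_sdiff K).mono fun B hB => hK B (h𝒮 hB))] at hcard
  have hK𝒮 : K ⊆ 𝒮.inf id := Finset.le_inf fun B hB => hK B (h𝒮 hB)
  have hinf : (𝒮.image (· \ K)).inf id = 𝒮.inf id \ K := by
    rw [inf_image]
    exact inf_sdiff_right (card_pos.1 (by omega)) id K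
  rw [hinf, card_sdiff_of_subset hK𝒮]
  exact mem_image_of_mem _ (mem_filter.2 ⟨h𝒜 𝒮 h𝒮 hcard, card_le_card hK𝒮⟩)

theorem card_le_sum_choose_of_forall_subset (h𝒜 : IsKWiseIntersecting k L 𝒜) (hk : 2 ≤ k)
    {K : Finset α} (hK : ∀ B ∈ 𝒜, K ⊆ B) (hL : (L.filter (K.card ≤ ·)).card ≤ t) :
    𝒜.card ≤ (k - 1) * ∑ i ∈ range (t + 1), (Fintype.card α - K.card).choose i := by
  rw [← card_compl, ← card_image_of_injOn ((superset_injOn_sdiff K).mono hK)]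
  refine (h𝒜.image_sdiff (by omega) hK).card_le_sum_choose hk (card_image_le.trans hL) ?_
  simp only [mem_image]
  rintro _ ⟨B, -, rfl⟩
  rw [sdiff_eq_inter_compl]
  exact inter_subset_right

lemma card_le_of_le_card_inf (h𝒜 : IsKWiseIntersecting k L 𝒜) (hk : 2 ≤ k) (hL : L.card ≤ s)
    (hl : l ≤ (𝒜.inf id).card) :
    𝒜.card ≤ (k - 1) * ∑ j ∈ range (s + 1), (Fintype.card α - l).choose j := by
  obtain ⟨K, hK, rfl⟩ := exists_subset_card_eq hl
  exact h𝒜.card_le_sum_choose_of_forall_subset hk (fun B hB => hK.trans (inf_le hB))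
    ((card_filter_le _ _).trans hL)

lemma card_le_of_card_inf_lt (h𝒜 : IsKWiseIntersecting k L 𝒜) (hk : 2 ≤ k) (hlL : l ∈ L)
    (hL : L.card ≤ s) (hh : ∀ B ∈ 𝒜, B.card ≤ h) (hpair : ∀ B ∈ 𝒜, ∀ C ∈ 𝒜, l ≤ (B ∩ C).card)
    (hne : 𝒜.Nonempty) (hinf : (𝒜.inf id).card < l)
    (hbig : ((h ^ 2 + h).choose (l + 1) + 1) * s + l ≤ Fintype.card α) :
    𝒜.card ≤ (k - 1) * ∑ j ∈ range (s + 1), (Fintype.card α - l).choose j := by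
  obtain ⟨W, hW, hBW⟩ := exists_card_le_lt_card_inter hne hh hpair hinf
  have hs : 1 ≤ s := (card_pos.2 ⟨l, hlL⟩).trans_le hL
  have hL' : (L.filter (l + 1 ≤ ·)).card ≤ s - 1 := by
    have := card_le_card (show L.filter (l + 1 ≤ ·) ⊆ L.erase l from fun x hx => by
      rw [mem_filter] at hx
      exact mem_erase.2 ⟨by omega, hx.1⟩)
    rw [card_erase_of_mem hlL] at this
    omega
  have hS : ∀ S ∈ W.powersetCard (l + 1), (𝒜.filter (S ⊆ ·)).card ≤
      (k - 1) * ∑ i ∈ range (s - 1 + 1), (Fintype.card α - (l + 1)).choose i := fun S hS => by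
    rw [← (mem_powersetCard.1 hS).2] at hL' ⊢
    exact (h𝒜.mono (filter_subset (S ⊆ ·) 𝒜)).card_le_sum_choose_of_forall_subset hk
      (fun B hB => (mem_filter.1 hB).2) hL'
  set c := (h ^ 2 + h).choose (l + 1)
  have hbig' : c * s + s + l ≤ Fintype.card α := by rwa [← add_one_mul]
  have hcs : c * s ≤ Fintype.card α - l - 1 + 1 := by omega
  calc 𝒜.card ≤ W.card.choose (l + 1) * ((k - 1) * ∑ i ∈ range (s - 1 + 1),
        (Fintype.card α - (l + 1)).choose i) := card_le_choose_mul_of_le_card_inter hBW hS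
    _ ≤ c * ((k - 1) * ∑ i ∈ range s, (Fintype.card α - l - 1).choose i) := by
      rw [Nat.sub_add_cancel hs, Nat.sub_add_eq]
      exact Nat.mul_le_mul_right _ (Nat.choose_le_choose _ hW)
    _ = (k - 1) * (c * ∑ i ∈ range s, (Fintype.card α - l - 1).choose i) := by ring
    _ ≤ (k - 1) * ∑ j ∈ range (s + 1), (Fintype.card α - l).choose j := by
      rw [← Nat.sub_add_cancel (show 1 ≤ Fintype.card α - l by omega)]
      exact Nat.mul_le_mul_left _ (mul_sum_range_choose_le hcs)

theorem card_le_sum_choose_sub (h𝒜 : IsKWiseIntersecting k L 𝒜) (hk : 2 ≤ k) (hlL : l ∈ L)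
    (hl : ∀ x ∈ L, l ≤ x) (hL : L.card ≤ s) (hh : ∀ B ∈ 𝒜, B.card ≤ h)
    (hbig : ((h ^ 2 + h).choose (l + 1) + 1) * s + l ≤ Fintype.card α) :
    𝒜.card ≤ (k - 1) * ∑ j ∈ range (s + 1), (Fintype.card α - l).choose j := by
  rcases lt_or_ge 𝒜.card k with hsmall | hlarge
  · have : 1 ≤ ∑ j ∈ range (s + 1), (Fintype.card α - l).choose j := by
      rw [sum_range_succ']
      simp
    calc 𝒜.card ≤ (k - 1) * 1 := by omega
      _ ≤ _ := Nat.mul_le_mul_left _ this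
  by_cases hinf : l ≤ (𝒜.inf id).card
  · exact h𝒜.card_le_of_le_card_inf hk hL hinf
  · exact h𝒜.card_le_of_card_inf_lt hk hlL hL hh
      (fun B hB C hC => h𝒜.le_card_inter hk hlarge hl hB hC)
      (card_pos.1 (by omega)) (not_le.1 hinf) hbig

end IsKWiseIntersecting

lemma isKWiseIntersecting_image [Fintype α] {ι : Type*} [Fintype ι] {A : ι → Finset α}
    (hA : Function.Injective A) {k : ℕ} {L : Finset ℕ}
    (hAL : ∀ f : Fin k → ι, Function.Injective f → (univ.inf fun i => A (f i)).card ∈ L) :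
    IsKWiseIntersecting k L (univ.image A) := by
  classical
  intro 𝒮 h𝒮 hk
  obtain ⟨I, -, rfl⟩ := subset_image_iff.1 h𝒮
  rw [card_image_of_injective _ hA] at hk
  let e := (I.equivFinOfCardEq hk).symm
  have hI : univ.image (fun i => (e i : ι)) = I := by
    ext x
    refine ⟨fun hx => ?_, fun hx => mem_image.2 ⟨e.symm ⟨x, hx⟩, mem_univ _, by simp⟩⟩
    obtain ⟨i, -, rfl⟩ := mem_image.1 hx
    exact (e i).2
  have := hAL (fun i => e i) (Subtype.val_injective.comp e.injective)
  rwa [← Function.comp_def A, ← inf_image, hI, ← Function.id_comp A, ← inf_image] at this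

theorem stmt_6_general (k s n m : ℕ) (hk : 2 ≤ k) (hs : 0 < s)
    (l : Fin s → ℕ) (hl : StrictMono l)
    (A : Fin m → Finset (Fin n)) (hA : Function.Injective A)
    (hAL : ∀ f : Fin k → Fin m, Function.Injective f →
      ∃ t, (Finset.univ.inf fun i => A (f i)).card = l t)
    (h : ℕ) (hh₁ : ∀ j, (A j).card ≤ h)
    (hbig : n ≥ ((h ^ 2 + h).choose (l ⟨0, hs⟩ + 1) + 1) * s + l ⟨0, hs⟩) :
    m ≤ (k - 1) * ∑ j ∈ Finset.range (s + 1), (n - l ⟨0, hs⟩).choose j := by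
  have h𝒜 : IsKWiseIntersecting k (univ.image l) (univ.image A) :=
    isKWiseIntersecting_image hA fun f hf => by
      obtain ⟨t, ht⟩ := hAL f hf
      exact ht ▸ mem_image_of_mem l (mem_univ t)
  have hmin : ∀ x ∈ univ.image l, l ⟨0, hs⟩ ≤ x := by
    simpa using fun i => hl.monotone (show ⟨0, hs⟩ ≤ i from Nat.zero_le _)
  have := h𝒜.card_le_sum_choose_sub hk (mem_image_of_mem l (mem_univ _)) hmin
    (card_image_le.trans_eq (card_fin s)) (by simpa using hh₁) (by simpa using hbig)
  simpa [card_image_of_injective _ hA] using this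

/-- **Theorem 3.5.** Let `k ≥ 2` and `ℒ = {l 0 < ⋯ < l (s-1)}` be a set of `s`
nonnegative integers. If `A 1, …, A m` are pairwise distinct subsets of `[n]` such
that the intersection of any `k` distinct members has cardinality in `ℒ`, `h` is the
maximum size of a member, and `n ≥ (C(h²+h, l₁+1) + 1)·s + l₁`, then
`m ≤ (k-1)·[C(n-l₁, s) + C(n-l₁, s-1) + ⋯ + C(n-l₁, 0)]`. -/
theorem stmt_6 (k s n m : ℕ) (hk : 2 ≤ k) (hs : 0 < s)
    (l : Fin s → ℕ) (hl : StrictMono l)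
    (A : Fin m → Finset (Fin n)) (hA : Function.Injective A)
    (hAL : ∀ f : Fin k → Fin m, Function.Injective f →
      ∃ t, (Finset.univ.inf fun i => A (f i)).card = l t)
    (h : ℕ) (hh₁ : ∀ j, (A j).card ≤ h) (hh₂ : ∃ j, (A j).card = h)
    (hbig : n ≥ ((h ^ 2 + h).choose (l ⟨0, hs⟩ + 1) + 1) * s + l ⟨0, hs⟩) :
    m ≤ (k - 1) * ∑ j ∈ Finset.range (s + 1), (n - l ⟨0, hs⟩).choose j :=
  stmt_6_general k s n m hk hs l hl A hA hAL h hh₁ hbig
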